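/- Let L be an r × s latin rectangle on symbol set [n] (each symbol at most once per row and column), with r, s ≤ n, and let N(i) be the number of occurrences of symbol i in L. Then L can be extended to a latin square of order n if and only if N(i) ≥ r + s − n for every i ∈ [n]. -/
import Mathlib

def IsLatinSquare {n : ℕ} (L : Fin n → Fin n → Fin n) : Prop :=
  (∀ i, Function.Bijective fun j => L i j) ∧
  (∀ j, Function.Bijective fun i => L i j)

open Finset Function

lemma count_swap {α β : Type*} [DecidableEq β] (S : Finset α) (T : Finset β)
    (t : α → Finset β) :
    ∑ a ∈ S, (T.filter (· ∈ t a)).card = ∑ b ∈ T, (S.filter (fun a => b ∈ t a)).card := by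
  simp only [Finset.card_filter]
  rw [Finset.sum_comm]

lemma hall_aux {α β : Type*} [DecidableEq β] (S : Finset α) (t : α → Finset β)
    (d : ℕ) (hd : 0 < d) (h1 : ∀ a ∈ S, d ≤ (t a).card)
    (h2 : ∀ b, (S.filter (fun a => b ∈ t a)).card ≤ d) :
    S.card ≤ (S.biUnion t).card := by
  classical
  have key : S.card * d ≤ (S.biUnion t).card * d := by
    calc S.card * d = ∑ _a ∈ S, d := by rw [Finset.sum_const, smul_eq_mul]
    _ ≤ ∑ a ∈ S, (t a).card := Finset.sum_le_sum h1
    _ = ∑ a ∈ S, ((S.biUnion t).filter (· ∈ t a)).card := by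
        refine Finset.sum_congr rfl fun a ha => ?_
        congr 1
        ext b
        simp only [Finset.mem_filter]
        exact ⟨fun h => ⟨Finset.mem_biUnion.2 ⟨a, ha, h⟩, h⟩, fun h => h.2⟩
    _ = ∑ b ∈ S.biUnion t, (S.filter (fun a => b ∈ t a)).card := count_swap ..
    _ ≤ ∑ _b ∈ S.biUnion t, d := Finset.sum_le_sum fun b _ => h2 b
    _ = (S.biUnion t).card * d := by rw [Finset.sum_const, smul_eq_mul]
  exact Nat.le_of_mul_le_mul_right key hd

def Nc {n r s : ℕ} (L : Fin r → Fin s → Fin n) (x : Fin n) : ℕ :=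
  (Finset.univ.filter fun p : Fin r × Fin s => L p.1 p.2 = x).card

lemma Nc_eq_sum {n r s : ℕ} (L : Fin r → Fin s → Fin n) (x : Fin n) :
    Nc L x = ∑ i, (Finset.univ.filter fun j => L i j = x).card := by
  rw [Nc, Finset.card_filter, Fintype.sum_prod_type]
  exact Finset.sum_congr rfl fun i _ => (Finset.card_filter _ _).symm

lemma Nc_eq_rows {n r s : ℕ} (L : Fin r → Fin s → Fin n)
    (hrow : ∀ i, Function.Injective (L i)) (x : Fin n) :
    Nc L x = (Finset.univ.filter fun i => ∃ j, L i j = x).card := by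
  rw [Nc_eq_sum, Finset.card_filter]
  refine Finset.sum_congr rfl fun i _ => ?_
  by_cases h : ∃ j, L i j = x
  · simp only [h, if_true]
    obtain ⟨j, hj⟩ := h
    refine le_antisymm (Finset.card_le_one.2 ?_) (Finset.card_pos.2 ⟨j, by simp [hj]⟩)
    intro a ha b hb
    simp only [Finset.mem_filter] at ha hb
    exact hrow i (ha.2.trans hb.2.symm)
  · simp only [h, if_false]
    rw [Finset.card_eq_zero, Finset.filter_eq_empty_iff]
    exact fun j _ hj => h ⟨j, hj⟩

lemma Nc_le {n r s : ℕ} (L : Fin r → Fin s → Fin n)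
    (hrow : ∀ i, Function.Injective (L i)) (x : Fin n) :
    Nc L x ≤ r := by
  rw [Nc_eq_rows L hrow]
  calc (Finset.univ.filter fun i => ∃ j, L i j = x).card
      ≤ (Finset.univ : Finset (Fin r)).card := Finset.card_filter_le _ _
    _ = r := by simp

lemma card_missing_rows {n r s : ℕ} (L : Fin r → Fin s → Fin n)
    (hrow : ∀ i, Function.Injective (L i)) (x : Fin n) :
    (Finset.univ.filter fun i => ∀ j, L i j ≠ x).card = r - Nc L x := by
  have h := Finset.card_filter_add_card_filter_not
    (s := (Finset.univ : Finset (Fin r))) (p := fun i => ∃ j, L i j = x)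
  rw [← Nc_eq_rows L hrow] at h
  have : (Finset.univ.filter fun i => ∀ j, L i j ≠ x)
      = (Finset.univ.filter fun i => ¬ ∃ j, L i j = x) := by
    apply Finset.filter_congr
    intro i _
    simp
  rw [this]
  simp only [Finset.card_univ, Fintype.card_fin] at h
  omega

lemma card_A {n r s : ℕ} (L : Fin r → Fin s → Fin n)
    (hrow : ∀ i, Function.Injective (L i)) (i : Fin r) :
    (Finset.univ.filter fun x => ∀ j, L i j ≠ x).card = n - s := by
  have : (Finset.univ.filter fun x => ∀ j, L i j ≠ x)
      = (Finset.univ.image (L i))ᶜ := by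
    ext x
    simp [eq_comm]
  rw [this, Finset.card_compl, Finset.card_image_of_injective _ (hrow i)]
  simp

lemma snoc_injective {m : ℕ} {β : Type*} {p : Fin m → β} {y : β}
    (hp : Function.Injective p) (hy : ∀ j, p j ≠ y) : Function.Injective (Fin.snoc p y) := by
  intro a b h
  rcases Fin.eq_castSucc_or_eq_last a with ⟨a', rfl⟩ | rfl <;>
    rcases Fin.eq_castSucc_or_eq_last b with ⟨b', rfl⟩ | rfl
  · rw [Fin.snoc_castSucc, Fin.snoc_castSucc] at h
    exact congrArg _ (hp h)
  · rw [Fin.snoc_castSucc, Fin.snoc_last] at h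
    exact absurd h (hy a')
  · rw [Fin.snoc_last, Fin.snoc_castSucc] at h
    exact absurd h.symm (hy b')
  · rfl

lemma hall_cond {n r s : ℕ} (L : Fin r → Fin s → Fin n) (hr : r ≤ n) (hsn : s < n)
    (hrow : ∀ i, Function.Injective (L i))
    (hN : ∀ x, r + s - n ≤ Nc L x)
    (S : Finset (Fin r ⊕ Fin (n - r))) :
    S.card ≤ (S.biUnion (Sum.elim (fun i => Finset.univ.filter fun x => ∀ j, L i j ≠ x)
      (fun _ => Finset.univ.filter fun x => r + s + 1 ≤ n + Nc L x))).card := by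
  classical
  set A : Fin r → Finset (Fin n) := fun i => Finset.univ.filter fun x => ∀ j, L i j ≠ x with hA
  set NC : Finset (Fin n) := Finset.univ.filter fun x => r + s + 1 ≤ n + Nc L x with hNC
  set t := Sum.elim A (fun _ : Fin (n-r) => NC) with ht
  have hcardA : ∀ i, (A i).card = n - s := fun i => card_A L hrow i
  have hdeg : ∀ x, (Finset.univ.filter fun i => x ∈ A i).card = r - Nc L x := by
    intro x
    have he : (Finset.univ.filter fun i => x ∈ A i)
        = Finset.univ.filter fun i => ∀ j, L i j ≠ x :=
      Finset.filter_congr (by intro i _; simp [hA])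
    rw [he, card_missing_rows L hrow x]
  have hS : S.card = S.toLeft.card + S.toRight.card :=
    (Finset.card_toLeft_add_card_toRight (u := S)).symm
  have hS1 : S.toLeft.card ≤ r := by
    calc S.toLeft.card ≤ (Finset.univ : Finset (Fin r)).card :=
          Finset.card_le_card (Finset.subset_univ _)
      _ = r := by simp
  have hS2 : S.toRight.card ≤ n - r := by
    calc S.toRight.card ≤ (Finset.univ : Finset (Fin (n-r))).card :=
          Finset.card_le_card (Finset.subset_univ _)
      _ = n - r := by simp
  have hBsub : S.toLeft.biUnion A ⊆ S.biUnion t := by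
    intro x hx
    rw [Finset.mem_biUnion] at hx ⊢
    obtain ⟨i, hi, hxi⟩ := hx
    exact ⟨Sum.inl i, Finset.mem_toLeft.1 hi, hxi⟩
  have hL : S.toLeft.card ≤ (S.toLeft.biUnion A).card := by
    apply hall_aux _ A (n - s) (by omega)
    · intro i _; rw [hcardA i]
    · intro x
      calc (S.toLeft.filter fun i => x ∈ A i).card
          ≤ (Finset.univ.filter fun i => x ∈ A i).card :=
            Finset.card_le_card (Finset.filter_subset_filter _ (Finset.subset_univ _))
        _ = r - Nc L x := hdeg x
        _ ≤ n - s := by have := hN x; have := Nc_le L hrow x; omega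
  rcases eq_or_ne S.toRight ∅ with hR | hR
  · rw [hS, hR]
    simpa using hL.trans (Finset.card_le_card hBsub)
  obtain ⟨d, hd⟩ := Finset.nonempty_iff_ne_empty.2 hR
  have hNCsub : NC ⊆ S.biUnion t := by
    intro x hx
    rw [Finset.mem_biUnion]
    exact ⟨Sum.inr d, Finset.mem_toRight.1 hd, hx⟩
  set C : Finset (Fin n) := Finset.univ.filter fun x => ¬ (r + s + 1 ≤ n + Nc L x) with hC
  set B := S.toLeft.biUnion A with hB
  have hkey : (C \ B).card ≤ r - S.toLeft.card := by
    have hcrit : ∀ x ∈ C \ B,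
        ((Finset.univ \ S.toLeft).filter fun i => x ∈ A i).card = n - s := by
      intro x hx
      have hx1 : x ∈ C := (Finset.mem_sdiff.1 hx).1
      have hx2 : x ∉ B := (Finset.mem_sdiff.1 hx).2
      have heq : ((Finset.univ \ S.toLeft).filter fun i => x ∈ A i)
          = Finset.univ.filter fun i => x ∈ A i := by
        ext i
        simp only [Finset.mem_filter, Finset.mem_sdiff, Finset.mem_univ, true_and]
        refine ⟨fun h => h.2, fun h => ⟨?_, h⟩⟩
        intro hiS
        exact hx2 (Finset.mem_biUnion.2 ⟨i, hiS, h⟩)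
      rw [heq, hdeg x]
      have h1 := hN x
      have h2 := Nc_le L hrow x
      rw [hC, Finset.mem_filter] at hx1
      omega
    have hcount : (C \ B).card * (n - s) ≤ (r - S.toLeft.card) * (n - s) := by
      calc (C \ B).card * (n - s) = ∑ _x ∈ C \ B, (n - s) := by
            rw [Finset.sum_const, smul_eq_mul]
        _ = ∑ x ∈ C \ B, ((Finset.univ \ S.toLeft).filter fun i => x ∈ A i).card :=
            Finset.sum_congr rfl fun x hx => (hcrit x hx).symm
        _ = ∑ i ∈ Finset.univ \ S.toLeft, ((C \ B).filter (· ∈ A i)).card :=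
            (count_swap (Finset.univ \ S.toLeft) (C \ B) A).symm
        _ ≤ ∑ _i ∈ Finset.univ \ S.toLeft, (n - s) := by
            refine Finset.sum_le_sum fun i _ => ?_
            calc ((C \ B).filter (· ∈ A i)).card ≤ (A i).card := by
                  apply Finset.card_le_card
                  intro x hx
                  exact (Finset.mem_filter.1 hx).2
              _ = n - s := hcardA i
        _ = (Finset.univ \ S.toLeft).card * (n - s) := by rw [Finset.sum_const, smul_eq_mul]
        _ = (r - S.toLeft.card) * (n - s) := by
            rw [Finset.card_sdiff_of_subset (Finset.subset_univ _)]
            simp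
    exact Nat.le_of_mul_le_mul_right hcount (by omega)
  have hunion : NC.card + (C ∩ B).card ≤ (S.biUnion t).card := by
    have hdisj : Disjoint NC (C ∩ B) := by
      rw [Finset.disjoint_left]
      intro x hx hx2
      have h1 := (Finset.mem_filter.1 (Finset.mem_of_mem_inter_left hx2)).2
      exact h1 (Finset.mem_filter.1 hx).2
    calc NC.card + (C ∩ B).card = (NC ∪ (C ∩ B)).card :=
          (Finset.card_union_of_disjoint hdisj).symm
      _ ≤ (S.biUnion t).card := Finset.card_le_card (Finset.union_subset hNCsub
          (fun x hx => hBsub (Finset.mem_of_mem_inter_right hx)))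
  have hCB : (C \ B).card + (C ∩ B).card = C.card := Finset.card_sdiff_add_card_inter C B
  have hNCC : NC.card + C.card = n := by
    have h := Finset.card_filter_add_card_filter_not
      (s := (Finset.univ : Finset (Fin n))) (p := fun x => r + s + 1 ≤ n + Nc L x)
    simp only [Finset.card_univ, Fintype.card_fin] at h
    exact h
  omega

lemma add_col {n r s : ℕ} (hr : r ≤ n) (hsn : s < n) (L : Fin r → Fin s → Fin n)
    (hrow : ∀ i, Function.Injective (L i))
    (hcol : ∀ j, Function.Injective fun i => L i j)
    (hN : ∀ x, r + s - n ≤ Nc L x) :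
    ∃ L' : Fin r → Fin (s + 1) → Fin n,
      (∀ i, Function.Injective (L' i)) ∧
      (∀ j, Function.Injective fun i => L' i j) ∧
      (∀ x, r + (s + 1) - n ≤ Nc L' x) ∧
      (∀ i j, L' i (Fin.castSucc j) = L i j) := by
  classical
  obtain ⟨f, hfinj, hft⟩ :=
    (Finset.all_card_le_biUnion_card_iff_exists_injective
      (Sum.elim (fun i => Finset.univ.filter fun x => ∀ j, L i j ≠ x)
        (fun _ : Fin (n - r) => Finset.univ.filter fun x => r + s + 1 ≤ n + Nc L x))).1
      (hall_cond L hr hsn hrow hN)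
  have hfbij : Function.Bijective f :=
    (Fintype.bijective_iff_injective_and_card f).2 ⟨hfinj, by simp; omega⟩
  set g : Fin r → Fin n := fun i => f (Sum.inl i) with hg
  have hginj : Function.Injective g := fun a b h => Sum.inl_injective (hfinj h)
  have hgA : ∀ i j, L i j ≠ g i := by
    intro i j
    have := hft (Sum.inl i)
    simp only [Sum.elim_inl, Finset.mem_filter] at this
    exact this.2 j
  refine ⟨fun i => Fin.snoc (L i) (g i), ?_, ?_, ?_, ?_⟩
  · intro i
    exact snoc_injective (hrow i) (hgA i)
  · intro j
    induction j using Fin.lastCases with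
    | last =>
      intro a b h
      simp only [Fin.snoc_last] at h
      exact hginj h
    | cast j' =>
      intro a b h
      simp only [Fin.snoc_castSucc] at h
      exact hcol j' h
  · intro x
    have hNc' : Nc (fun i => Fin.snoc (L i) (g i)) x
        = Nc L x + (Finset.univ.filter fun i => g i = x).card := by
      rw [Nc_eq_sum, Nc_eq_sum, Finset.card_filter (fun i => g i = x), ← Finset.sum_add_distrib]
      refine Finset.sum_congr rfl fun i _ => ?_
      rw [Finset.card_filter, Finset.card_filter, Fin.sum_univ_castSucc]
      simp only [Fin.snoc_castSucc, Fin.snoc_last]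
    obtain ⟨w, hw⟩ := hfbij.2 x
    rcases w with i | d
    · have hgi : g i = x := hw
      have hpos : 0 < (Finset.univ.filter fun i => g i = x).card :=
        Finset.card_pos.2 ⟨i, by simp [hgi]⟩
      have := hN x
      omega
    · have := hft (Sum.inr d)
      simp only [Sum.elim_inr, Finset.mem_filter] at this
      rw [hw] at this
      have h2 := this.2
      omega
  · intro i j
    simp [Fin.snoc_castSucc]

lemma add_row {n r : ℕ} (hrn : r < n) (L : Fin r → Fin n → Fin n)
    (hrow : ∀ i, Function.Injective (L i))
    (hcol : ∀ j, Function.Injective fun i => L i j) :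
    ∃ L' : Fin (r + 1) → Fin n → Fin n,
      (∀ i, Function.Injective (L' i)) ∧
      (∀ j, Function.Injective fun i => L' i j) ∧
      (∀ i j, L' (Fin.castSucc i) j = L i j) := by
  classical
  have hrbij : ∀ i, Function.Bijective (L i) := fun i =>
    (Fintype.bijective_iff_injective_and_card (L i)).2 ⟨hrow i, rfl⟩
  set t : Fin n → Finset (Fin n) := fun j => Finset.univ.filter fun x => ∀ i, L i j ≠ x with ht
  have hcardt : ∀ j, (t j).card = n - r := by
    intro j
    have he : t j = (Finset.univ.image fun i => L i j)ᶜ := by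
      ext x
      simp [ht, eq_comm]
    rw [he, Finset.card_compl, Finset.card_image_of_injective _ (hcol j)]
    simp
  have hcols_with : ∀ x : Fin n, r ≤ (Finset.univ.filter fun j => ∃ i, L i j = x).card := by
    intro x
    set e : Fin r → Fin n := fun i => (Equiv.ofBijective (L i) (hrbij i)).symm x with he
    have hLe : ∀ i, L i (e i) = x := fun i =>
      (Equiv.ofBijective (L i) (hrbij i)).apply_symm_apply x
    have heinj : Function.Injective e := by
      intro a b h
      apply hcol (e a)
      show L a (e a) = L b (e a)
      rw [hLe a, h, hLe b]
    calc r = (Finset.univ.image e).card := by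
          rw [Finset.card_image_of_injective _ heinj]; simp
      _ ≤ _ := by
          apply Finset.card_le_card
          intro j hj
          obtain ⟨i, _, rfl⟩ := Finset.mem_image.1 hj
          exact Finset.mem_filter.2 ⟨Finset.mem_univ _, ⟨i, hLe i⟩⟩
  have hdeg : ∀ x, (Finset.univ.filter fun j => x ∈ t j).card ≤ n - r := by
    intro x
    have h := Finset.card_filter_add_card_filter_not
      (s := (Finset.univ : Finset (Fin n))) (p := fun j => ∃ i, L i j = x)
    simp only [Finset.card_univ, Fintype.card_fin] at h
    have he : (Finset.univ.filter fun j => x ∈ t j)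
        = Finset.univ.filter fun j => ¬ ∃ i, L i j = x := by
      apply Finset.filter_congr
      intro j _
      simp [ht]
    rw [he]
    have := hcols_with x
    omega
  have hall : ∀ S : Finset (Fin n), S.card ≤ (S.biUnion t).card := by
    intro S
    apply hall_aux S t (n - r) (by omega)
    · intro j _; rw [hcardt j]
    · intro x
      calc (S.filter fun j => x ∈ t j).card
          ≤ (Finset.univ.filter fun j => x ∈ t j).card :=
            Finset.card_le_card (Finset.filter_subset_filter _ (Finset.subset_univ _))
        _ ≤ n - r := hdeg x
  obtain ⟨f, hfinj, hft⟩ := (Finset.all_card_le_biUnion_card_iff_exists_injective t).1 hall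
  have hfA : ∀ i j, L i j ≠ f j := by
    intro i j
    have := hft j
    simp only [ht, Finset.mem_filter] at this
    exact this.2 i
  refine ⟨Fin.snoc L f, ?_, ?_, ?_⟩
  · intro i
    induction i using Fin.lastCases with
    | last => simpa [Fin.snoc_last] using hfinj
    | cast i' => simpa [Fin.snoc_castSucc] using hrow i'
  · intro j a b h
    simp only at h
    rcases Fin.eq_castSucc_or_eq_last a with ⟨a', rfl⟩ | rfl <;>
      rcases Fin.eq_castSucc_or_eq_last b with ⟨b', rfl⟩ | rfl
    · rw [Fin.snoc_castSucc, Fin.snoc_castSucc] at h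
      exact congrArg _ (hcol j h)
    · rw [Fin.snoc_castSucc, Fin.snoc_last] at h
      exact absurd h (hfA a' j)
    · rw [Fin.snoc_last, Fin.snoc_castSucc] at h
      exact absurd h.symm (hfA b' j)
    · rfl
  · intro i j
    simp [Fin.snoc_castSucc]

lemma extend_rows {n : ℕ} : ∀ (k r : ℕ) (h : r + k = n) (L : Fin r → Fin n → Fin n),
    (∀ i, Function.Injective (L i)) → (∀ j, Function.Injective fun i => L i j) →
    ∃ M : Fin n → Fin n → Fin n, IsLatinSquare M ∧
      ∀ i j, M (Fin.castLE (Nat.le.intro h) i) j = L i j := by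
  intro k
  induction k with
  | zero =>
    intro r h L hrow hcol
    have h' : r = n := by omega
    refine ⟨fun i j => L (Fin.cast h'.symm i) j, ⟨?_, ?_⟩, ?_⟩
    · intro i
      exact (Fintype.bijective_iff_injective_and_card _).2 ⟨hrow _, rfl⟩
    · intro j
      refine (Fintype.bijective_iff_injective_and_card _).2 ⟨?_, rfl⟩
      intro a b hab
      have := hcol j hab
      exact Fin.cast_injective _ this
    · intro i j
      show L (Fin.cast h'.symm (Fin.castLE (Nat.le.intro h) i)) j = L i j
      have he : Fin.cast h'.symm (Fin.castLE (Nat.le.intro h) i) = i := by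
        apply Fin.ext; simp
      rw [he]
  | succ k ih =>
    intro r h L hrow hcol
    obtain ⟨L', hrow', hcol', hext⟩ := add_row (by omega) L hrow hcol
    obtain ⟨M, hM, hMext⟩ := ih (r + 1) (by omega) L' hrow' hcol'
    refine ⟨M, hM, ?_⟩
    intro i j
    have he : Fin.castLE (Nat.le.intro h) i
        = Fin.castLE (Nat.le.intro (by omega : r + 1 + k = n)) (Fin.castSucc i) := by
      apply Fin.ext; simp
    rw [he, hMext, hext]

lemma extend_cols {n r : ℕ} (hr : r ≤ n) :
    ∀ (k s : ℕ) (h : s + k = n) (L : Fin r → Fin s → Fin n),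
    (∀ i, Function.Injective (L i)) → (∀ j, Function.Injective fun i => L i j) →
    (∀ x, r + s - n ≤ Nc L x) →
    ∃ M : Fin n → Fin n → Fin n, IsLatinSquare M ∧
      ∀ i j, M (Fin.castLE hr i) (Fin.castLE (Nat.le.intro h) j) = L i j := by
  intro k
  induction k with
  | zero =>
    intro s h L hrow hcol _
    have h' : s = n := by omega
    obtain ⟨M, hM, hMext⟩ := extend_rows (n - r) r (by omega)
      (fun i j => L i (Fin.cast h'.symm j))
      (fun i a b hab => Fin.cast_injective _ (hrow i hab))
      (fun j => hcol _)
    refine ⟨M, hM, ?_⟩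
    intro i j
    rw [hMext i (Fin.castLE (Nat.le.intro h) j)]
    exact congrArg (L i) (Fin.ext (by simp))
  | succ k ih =>
    intro s h L hrow hcol hN
    obtain ⟨L', hrow', hcol', hN', hext⟩ := add_col hr (by omega) L hrow hcol hN
    obtain ⟨M, hM, hMext⟩ := ih (s + 1) (by omega) L' hrow' hcol' hN'
    refine ⟨M, hM, ?_⟩
    intro i j
    have he : Fin.castLE (Nat.le.intro h) j
        = Fin.castLE (Nat.le.intro (by omega : s + 1 + k = n)) (Fin.castSucc j) := by
      apply Fin.ext; simp
    rw [he, hMext, hext]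

/-- Ryser: an r × s latin rectangle on [n] extends to a latin
square of order n iff every symbol occurs at least r + s − n times. -/
theorem ryser (n r s : ℕ) (hr : r ≤ n) (hs : s ≤ n)
    (L : Fin r → Fin s → Fin n)
    (hrow : ∀ i, Function.Injective fun j => L i j)
    (hcol : ∀ j, Function.Injective fun i => L i j) :
    (∃ M : Fin n → Fin n → Fin n, IsLatinSquare M ∧
      ∀ (i : Fin r) (j : Fin s), M (Fin.castLE hr i) (Fin.castLE hs j) = L i j) ↔
    (∀ x : Fin n,
      r + s - n ≤ (Finset.univ.filter fun p : Fin r × Fin s => L p.1 p.2 = x).card) := by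
  constructor
  · rintro ⟨M, ⟨hrows, hcols⟩, hM⟩ x
    show r + s - n ≤ Nc L x
    classical
    set Rset : Finset (Fin n) := Finset.univ.map ⟨Fin.castLE hr, Fin.castLE_injective hr⟩ with hRset
    set Sset : Finset (Fin n) := Finset.univ.map ⟨Fin.castLE hs, Fin.castLE_injective hs⟩ with hSset
    have hF : ∀ i : Fin n, ∑ j, (if M i j = x then (1:ℕ) else 0) = 1 := by
      intro i
      obtain ⟨j0, hj0⟩ := (hrows i).2 x
      have he : ∀ j, (if M i j = x then (1:ℕ) else 0) = if j = j0 then 1 else 0 := by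
        intro j
        congr 1
        simp only [eq_iff_iff]
        exact ⟨fun h => (hrows i).1 (h.trans hj0.symm), fun h => h ▸ hj0⟩
      rw [Finset.sum_congr rfl fun j _ => he j]
      simp
    have hG : ∀ j : Fin n, ∑ i, (if M i j = x then (1:ℕ) else 0) = 1 := by
      intro j
      obtain ⟨i0, hi0⟩ := (hcols j).2 x
      have he : ∀ i, (if M i j = x then (1:ℕ) else 0) = if i = i0 then 1 else 0 := by
        intro i
        congr 1
        simp only [eq_iff_iff]
        exact ⟨fun h => (hcols j).1 (h.trans hi0.symm), fun h => h ▸ hi0⟩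
      rw [Finset.sum_congr rfl fun i _ => he i]
      simp
    have h1 : ∑ i ∈ Rset, ∑ j, (if M i j = x then (1:ℕ) else 0) = r := by
      rw [Finset.sum_congr rfl fun i _ => hF i]
      simp [hRset]
    have h3 : ∑ i ∈ Rset, ∑ j ∈ Sset, (if M i j = x then (1:ℕ) else 0) = Nc L x := by
      rw [hRset, hSset, Finset.sum_map]
      simp only [Finset.sum_map, Function.Embedding.coeFn_mk]
      have he : ∀ (i : Fin r) (j : Fin s),
          (if M (Fin.castLE hr i) (Fin.castLE hs j) = x then (1:ℕ) else 0)
          = if L i j = x then 1 else 0 := fun i j => by rw [hM]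
      simp only [he]
      rw [Nc, Finset.card_filter, Fintype.sum_prod_type]
    have h4 : ∑ i ∈ Rset, ∑ j ∈ Ssetᶜ, (if M i j = x then (1:ℕ) else 0) ≤ n - s := by
      calc ∑ i ∈ Rset, ∑ j ∈ Ssetᶜ, (if M i j = x then (1:ℕ) else 0)
          = ∑ j ∈ Ssetᶜ, ∑ i ∈ Rset, (if M i j = x then (1:ℕ) else 0) := Finset.sum_comm
        _ ≤ ∑ j ∈ Ssetᶜ, ∑ i, (if M i j = x then (1:ℕ) else 0) :=
            Finset.sum_le_sum fun j _ => Finset.sum_le_sum_of_subset (Finset.subset_univ _)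
        _ = ∑ _j ∈ Ssetᶜ, 1 := Finset.sum_congr rfl fun j _ => hG j
        _ = Ssetᶜ.card := by simp
        _ = n - s := by rw [Finset.card_compl]; simp [hSset]
    have hmain : r = Nc L x + ∑ i ∈ Rset, ∑ j ∈ Ssetᶜ, (if M i j = x then (1:ℕ) else 0) := by
      rw [← h3, ← h1, ← Finset.sum_add_distrib]
      exact Finset.sum_congr rfl fun i _ => (Finset.sum_add_sum_compl Sset _).symm
    omega
  · intro hN
    obtain ⟨M, hM, hMext⟩ := extend_cols hr (n - s) s (by omega) L hrow hcol (fun x => hN x)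
    exact ⟨M, hM, fun i j => hMext i j⟩
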